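/- For k ≥ 1, the word V_{k−1}^− (V_{k−1} deprived of its last letter) is a prefix of V_k, where V_k are the words of the binary recursion with Ostrowski digits. Consequently the sequence (V_k)_{k≥0} converges letterwise to an infinite word. -/

import Mathlib

/-! If `b_{k+1} < a_{k+1}`, then `V_{k+1}` begins with `V_k`. Otherwise the Ostrowski rule forces
`b_k = 0`, so `V_k = V_{k-1}^{a_k} V_{k-2}` and `V_{k+1}` begins with
`V_{k-1} V_k = V_{k-1}^{a_k} V_{k-1} V_{k-2}`, of which `V_k^− = V_{k-1}^{a_k} V_{k-2}^−` is a prefix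
because, by induction, `V_{k-2}^−` is a prefix of `V_{k-1}`. As `|V_k| ≥ k`, every prefix stabilises. -/

/-- `m`-fold concatenation of a word. -/
def wpow (W : List ℕ) : ℕ → List ℕ
  | 0 => []
  | n + 1 => W ++ wpow W n

open Filter

section Convergence

variable {α : Type*} {W : ℕ → List α} {i k K : ℕ}

theorem getElem?_succ_eq_of_dropLast_prefix (hpre : (W k).dropLast <+: W (k + 1))
    (hi : i + 1 < (W k).length) : (W (k + 1))[i]? = (W k)[i]? := by
  have hi' : i < (W k).dropLast.length := by rw [List.length_dropLast]; omega
  rw [List.prefix_iff_getElem?.1 hpre i hi', List.getElem_dropLast, List.getElem?_eq_getElem]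

theorem getElem?_eq_of_dropLast_prefix (hpre : ∀ j, (W j).dropLast <+: W (j + 1))
    (hlen : ∀ k, K ≤ k → i + 1 < (W k).length) (hk : K ≤ k) : (W k)[i]? = (W K)[i]? := by
  induction k, hk using Nat.le_induction with
  | base => rfl
  | succ k hk ih => rw [getElem?_succ_eq_of_dropLast_prefix (hpre k) (hlen k hk), ih]

theorem exists_take_eq_map_of_dropLast_prefix (hpre : ∀ j, (W j).dropLast <+: W (j + 1))
    (hlen : Tendsto (fun j ↦ (W j).length) atTop atTop) :
    ∃ s : ℕ → α, ∀ n : ℕ, ∃ K : ℕ, ∀ k : ℕ, K ≤ k →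
      (W k).take (n + 1) = (List.range (n + 1)).map s := by
  choose N hN using fun i ↦ eventually_atTop.1 (hlen.eventually_gt_atTop (i + 1))
  let s i := (W (N i))[i]'(by have := hN i (N i) le_rfl; omega)
  have hs : ∀ i k, N i ≤ k → (W k)[i]? = some (s i) := fun i k hk ↦ by
    rw [getElem?_eq_of_dropLast_prefix hpre (hN i) hk, List.getElem?_eq_getElem]
  refine ⟨s, fun n ↦ ⟨(Finset.range (n + 1)).sup N, fun k hk ↦ List.ext_getElem? fun i ↦ ?_⟩⟩
  by_cases hi : i < n + 1
  · have hNk : N i ≤ k := (Finset.le_sup (Finset.mem_range.2 hi)).trans hk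
    simp [hi, hs i k hNk]
  · simp [hi]

end Convergence

section Wpow

variable (W : List ℕ)

theorem length_wpow (n : ℕ) : (wpow W n).length = n * W.length := by
  induction n with
  | zero => simp [wpow]
  | succ n ih => simp [wpow, ih, Nat.succ_mul, Nat.add_comm]

theorem wpow_succ' (n : ℕ) : wpow W (n + 1) = wpow W n ++ W := by
  induction n with
  | zero => simp [wpow]
  | succ n ih =>
    show W ++ wpow W (n + 1) = (W ++ wpow W n) ++ W
    rw [ih, List.append_assoc]

theorem append_wpow_comm (n : ℕ) : W ++ wpow W n = wpow W n ++ W :=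
  wpow_succ' W n

theorem length_wpow_sub_append_wpow {a b : ℕ} (hba : b ≤ a) (X : List ℕ) :
    (wpow W (a - b) ++ X ++ wpow W b).length = a * W.length + X.length := by
  simp only [List.length_append, length_wpow]
  rw [Nat.add_right_comm, ← Nat.add_mul, Nat.sub_add_cancel hba]

variable {W}

theorem dropLast_wpow_append_prefix {X : List ℕ} (h : X.dropLast <+: W) (c : ℕ) :
    (wpow W c ++ X).dropLast <+: W ++ (wpow W c ++ X) := by
  rw [← List.append_assoc, append_wpow_comm, List.append_assoc, List.dropLast_append]
  split
  · exact (List.dropLast_prefix _).trans (List.prefix_append _ _)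
  · exact (List.prefix_append_right_inj _).2 (h.trans (List.prefix_append _ _))

end Wpow

section OstrowskiWords

variable {a b : ℕ → ℕ} {V : ℕ → List ℕ}

theorem le_length_V (ha : ∀ k : ℕ, 1 ≤ k → 1 ≤ a k) (hb : ∀ k : ℕ, 2 ≤ k → b k ≤ a k)
    (hV0 : V 0 = [0]) (hV1 : V 1 = wpow [0] (a 1 - b 1 - 1) ++ [1] ++ wpow [0] (b 1))
    (hV : ∀ k : ℕ, 1 ≤ k →
      V (k + 1) = wpow (V k) (a (k + 1) - b (k + 1)) ++ V (k - 1) ++ wpow (V k) (b (k + 1)))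
    (k : ℕ) : k ≤ (V k).length := by
  suffices h : ∀ n, 1 ≤ (V n).length ∧ n + 1 ≤ (V (n + 1)).length by
    cases k with
    | zero => exact Nat.zero_le _
    | succ k => exact (h k).2
  intro n
  induction n with
  | zero =>
    simp only [hV0, hV1, List.length_append, List.length_singleton, length_wpow]
    omega
  | succ n ih =>
    show 1 ≤ (V (n + 1)).length ∧ n + 2 ≤ (V (n + 2)).length
    have hrec : (V (n + 2)).length = a (n + 2) * (V (n + 1)).length + (V n).length := by
      rw [hV (n + 1) le_add_self, length_wpow_sub_append_wpow _ (hb (n + 2) le_add_self)]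
      rfl
    have hgrow := Nat.le_mul_of_pos_left (V (n + 1)).length (ha (n + 2) le_add_self)
    omega

theorem dropLast_V_prefix_V_succ (ha : ∀ k : ℕ, 1 ≤ k → 1 ≤ a k)
    (hb : ∀ k : ℕ, 2 ≤ k → b k ≤ a k) (hrule : ∀ k : ℕ, 1 ≤ k → b (k + 1) = a (k + 1) → b k = 0)
    (hV0 : V 0 = [0]) (hV1 : V 1 = wpow [0] (a 1 - b 1 - 1) ++ [1] ++ wpow [0] (b 1))
    (hV : ∀ k : ℕ, 1 ≤ k →
      V (k + 1) = wpow (V k) (a (k + 1) - b (k + 1)) ++ V (k - 1) ++ wpow (V k) (b (k + 1)))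
    (j : ℕ) : (V j).dropLast <+: V (j + 1) := by
  induction j using Nat.strong_induction_on with
  | _ j ih =>
    match j with
    | 0 => simp [hV0]
    | j + 1 =>
      have hrec := hV (j + 1) le_add_self
      rw [Nat.add_sub_cancel] at hrec
      rcases (hb (j + 2) le_add_self).lt_or_eq with hlt | heq
      · obtain ⟨c, hc⟩ : ∃ c, a (j + 2) - b (j + 2) = c + 1 := Nat.exists_eq_add_one.2 (by omega)
        rw [hrec, hc, wpow, List.append_assoc, List.append_assoc]
        exact (List.dropLast_prefix _).trans (List.prefix_append _ _)
      · have hb0 : b (j + 1) = 0 := hrule (j + 1) le_add_self heq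
        -- `X = V (j - 1)`, or `X = V_{-1} = [1]` when `j = 0`
        obtain ⟨c, X, hVX, hX⟩ : ∃ c X, V (j + 1) = wpow (V j) c ++ X ∧ X.dropLast <+: V j := by
          cases j with
          | zero => exact ⟨a 1 - 1, [1], by rw [hV1, hb0, hV0]; simp [wpow], by simp⟩
          | succ i => exact ⟨a (i + 2), V i, by rw [hV (i + 1) le_add_self, hb0]; simp [wpow],
              ih i (by omega)⟩
        have hhead : (V (j + 1)).dropLast <+: V j ++ V (j + 1) :=
          hVX ▸ dropLast_wpow_append_prefix hX c
        obtain ⟨c', hc'⟩ : ∃ c', a (j + 2) = c' + 1 :=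
          Nat.exists_eq_add_one.2 (ha (j + 2) le_add_self)
        rw [hrec, heq, Nat.sub_self, hc']
        exact hhead.trans ⟨wpow (V (j + 1)) c', by simp [wpow]⟩

end OstrowskiWords

theorem V_converges_general (a b : ℕ → ℕ) (ha : ∀ k : ℕ, 1 ≤ k → 1 ≤ a k)
    (hb : ∀ k : ℕ, 2 ≤ k → b k ≤ a k)
    (hrule : ∀ k : ℕ, 1 ≤ k → b (k + 1) = a (k + 1) → b k = 0)
    (V : ℕ → List ℕ) (hV0 : V 0 = [0])
    (hV1 : V 1 = wpow [0] (a 1 - b 1 - 1) ++ [1] ++ wpow [0] (b 1))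
    (hV : ∀ k : ℕ, 1 ≤ k →
      V (k + 1) = wpow (V k) (a (k + 1) - b (k + 1)) ++ V (k - 1) ++ wpow (V k) (b (k + 1))) :
    (∀ k : ℕ, 1 ≤ k → (V (k - 1)).dropLast <+: V k) ∧
    ∃ s : ℕ → ℕ, ∀ n : ℕ, ∃ K : ℕ, ∀ k : ℕ, K ≤ k →
      (V k).take (n + 1) = (List.range (n + 1)).map s := by
  have hpre := dropLast_V_prefix_V_succ ha hb hrule hV0 hV1 hV
  have hlen : Tendsto (fun k ↦ (V k).length) atTop atTop :=
    tendsto_atTop_mono (le_length_V ha hb hV0 hV1 hV) tendsto_id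
  refine ⟨fun k hk ↦ ?_, exists_take_eq_map_of_dropLast_prefix hpre hlen⟩
  obtain ⟨j, rfl⟩ := Nat.exists_eq_add_of_le' hk
  exact hpre j

/-- `V_{k−1}` deprived of its last letter is a prefix of `V_k`; consequently the
sequence `(V_k)` converges letterwise to an infinite word. -/
theorem V_converges (a b : ℕ → ℕ) (ha : ∀ k : ℕ, 1 ≤ k → 1 ≤ a k)
    (hb1 : b 1 ≤ a 1 - 1) (hb : ∀ k : ℕ, 2 ≤ k → b k ≤ a k)
    (hrule : ∀ k : ℕ, 1 ≤ k → b (k + 1) = a (k + 1) → b k = 0)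
    (V : ℕ → List ℕ) (hV0 : V 0 = [0])
    (hV1 : V 1 = wpow [0] (a 1 - b 1 - 1) ++ [1] ++ wpow [0] (b 1))
    (hV : ∀ k : ℕ, 1 ≤ k →
      V (k + 1) = wpow (V k) (a (k + 1) - b (k + 1)) ++ V (k - 1) ++ wpow (V k) (b (k + 1))) :
    (∀ k : ℕ, 1 ≤ k → (V (k - 1)).dropLast <+: V k) ∧
    ∃ s : ℕ → ℕ, ∀ n : ℕ, ∃ K : ℕ, ∀ k : ℕ, K ≤ k →
      (V k).take (n + 1) = (List.range (n + 1)).map s :=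
  V_converges_general a b ha hb hrule V hV0 hV1 hV
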